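/- Secret sharing privacy bound: if the unprotected model information has distribution P^O uniform on ∏_{j=1}^n [c_j − δ, c_j + δ] and the protected (secret-shared) information has distribution P^S uniform on ∏_{j=1}^n [c_j − a_j, c_j + b_j] with 0 < δ < a_j, b_j, then the Bayesian privacy leakage satisfies √JS(f^A ‖ f_B) ≥ √JS(f^O ‖ f_B) − (1/2)·(e^{2ξ} − 1)·(1 − ∏_{j=1}^n (2δ/(a_j + b_j))). -/

import Mathlib

open MeasureTheory

/-- Jensen–Shannon divergence between two probability densities `p, q` on `(𝒟, μ)`:
`JS(p ‖ q) = (1/2)∫ p·log(p/m) dμ + (1/2)∫ q·log(q/m) dμ` with `m = (p+q)/2`. -/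
noncomputable def JSdiv {α : Type*} [MeasurableSpace α] (μ : Measure α) (p q : α → ℝ) : ℝ :=
  (1 / 2) * ∫ d, p d * Real.log (p d / ((p d + q d) / 2)) ∂μ
    + (1 / 2) * ∫ d, q d * Real.log (q d / ((p d + q d) / 2)) ∂μ

/-- The uniform probability measure on a set `s ⊆ ℝⁿ`: the measure with constant density
`1/vol(s)` on `s` with respect to Lebesgue measure. -/
noncomputable def uniformOn {n : ℕ} (s : Set (Fin n → ℝ)) : Measure (Fin n → ℝ) :=
  (volume s)⁻¹ • volume.restrict s

section Aux

noncomputable def Lfun (t : ℝ) : ℝ := Real.log (2 * t / (1 + t))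
noncomputable def js1 (t : ℝ) : ℝ :=
  (t * Real.log (2 * t / (1 + t)) + Real.log (2 / (1 + t))) / 2

lemma Lfun_hasDeriv {t : ℝ} (ht : 0 < t) :
    HasDerivAt Lfun (1 / (t * (1 + t))) t := by
  have h1 : (0:ℝ) < 1 + t := by linarith
  have hinner : HasDerivAt (fun t : ℝ => 2 * t / (1 + t))
      ((2 * 1 * (1 + t) - 2 * t * 1) / (1 + t) ^ 2) t :=
    (((hasDerivAt_id t).const_mul 2)).div (((hasDerivAt_id t)).const_add 1) h1.ne'
  have hpos : 2 * t / (1 + t) ≠ 0 := by positivity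
  have := hinner.log hpos
  convert this using 1
  · rfl
  field_simp
  ring

lemma js1_hasDeriv {t : ℝ} (ht : 0 < t) :
    HasDerivAt js1 (Lfun t / 2) t := by
  have h1 : (0:ℝ) < 1 + t := by linarith
  have h2 : HasDerivAt (fun t : ℝ => t * Lfun t) (1 * Lfun t + t * (1 / (t * (1 + t)))) t :=
    (hasDerivAt_id t).mul (Lfun_hasDeriv ht)
  have hinner : HasDerivAt (fun t : ℝ => 2 / (1 + t))
      ((0 * (1 + t) - 2 * 1) / (1 + t) ^ 2) t :=
    (hasDerivAt_const t 2).div ((hasDerivAt_id t).const_add 1) h1.ne'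
  have h3 : HasDerivAt (fun t : ℝ => Real.log (2 / (1 + t)))
      (((0 * (1 + t) - 2 * 1) / (1 + t) ^ 2) / (2 / (1 + t))) t :=
    hinner.log (by positivity)
  have h4 := (h2.add h3).div_const 2
  have heq : (fun t : ℝ => (t * Lfun t + Real.log (2 / (1 + t))) / 2) = js1 := by
    funext x; simp [js1, Lfun]
  have h4 : HasDerivAt (fun t : ℝ => (t * Lfun t + Real.log (2 / (1 + t))) / 2) _ t := h4
  rw [heq] at h4
  convert h4 using 1
  unfold Lfun
  field_simp
  ring

lemma js1_one : js1 1 = 0 := by norm_num [js1]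

lemma Lfun_one : Lfun 1 = 0 := by norm_num [Lfun]

lemma js1_nonneg {t : ℝ} (ht : 0 < t) : 0 ≤ js1 t := by
  have h1 : (0:ℝ) < 1 + t := by linarith
  have ha := Real.log_le_sub_one_of_pos (show (0:ℝ) < (1+t)/(2*t) by positivity)
  have hb := Real.log_le_sub_one_of_pos (show (0:ℝ) < (1+t)/2 by positivity)
  have e1 : Real.log (2*t/(1+t)) = - Real.log ((1+t)/(2*t)) := by
    rw [← Real.log_inv]; congr 1; field_simp
  have e2 : Real.log (2/(1+t)) = - Real.log ((1+t)/2) := by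
    rw [← Real.log_inv]; congr 1; rw [inv_div]
  unfold js1
  rw [e1, e2]
  have h2 : t * Real.log ((1+t)/(2*t)) ≤ t * ((1+t)/(2*t) - 1) :=
    mul_le_mul_of_nonneg_left ha ht.le
  have h3 : t * ((1+t)/(2*t) - 1) = (1+t)/2 - t := by field_simp
  nlinarith

lemma Lfun_nonneg {t : ℝ} (ht : 1 ≤ t) : 0 ≤ Lfun t := by
  apply Real.log_nonneg
  rw [le_div_iff₀ (by linarith)]
  linarith

-- case t ≥ 1 : L² ≤ 2 t (1+t) js1
lemma L_sq_le_right {t : ℝ} (ht : 1 ≤ t) : Lfun t ^ 2 ≤ 2 * t * (1 + t) * js1 t := by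
  set N : ℝ → ℝ := fun t => 2 * t * (1 + t) * js1 t - Lfun t ^ 2 with hN
  have hNder : ∀ s : ℝ, 0 < s → HasDerivAt N
      (2 * (1 + 2*s) * js1 s + s * (1+s) * Lfun s - 2 * Lfun s * (1 / (s * (1 + s)))) s := by
    intro s hs
    have h1 : HasDerivAt (fun s : ℝ => 2 * s * (1 + s)) (2 * (1 + s) + 2 * s * 1) s := by
      have := (((hasDerivAt_id s).const_mul 2)).mul ((hasDerivAt_id s).const_add 1)
      exact this.congr_deriv (by simp only [id]; ring)
    have h2 := h1.mul (js1_hasDeriv hs)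
    have h3 := (Lfun_hasDeriv hs).pow 2
    have h4 := h2.sub h3
    exact h4.congr_deriv (by push_cast; norm_num; ring)
  have hmono : MonotoneOn N (Set.Ici 1) := by
    apply monotoneOn_of_deriv_nonneg (convex_Ici 1)
    · intro x hx
      exact ((hNder x (by simp at hx; linarith)).differentiableAt.continuousAt).continuousWithinAt
    · intro x hx
      rw [interior_Ici] at hx
      exact ((hNder x (by simp at hx; linarith)).differentiableAt).differentiableWithinAt
    · intro x hx
      rw [interior_Ici] at hx
      simp only [Set.mem_Ioi] at hx
      have hx0 : (0:ℝ) < x := by linarith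
      rw [(hNder x hx0).deriv]
      have hjs := js1_nonneg hx0
      have hL := Lfun_nonneg hx.le
      have h5 : (2:ℝ) ≤ x * (1 + x) := by nlinarith
      have h6 : 1 / (x * (1 + x)) ≤ 1 := by
        rw [div_le_one (by positivity)]; linarith
      nlinarith
  have := hmono (Set.mem_Ici.2 le_rfl) (Set.mem_Ici.2 ht) ht
  simp only [hN, js1_one, Lfun_one] at this ⊢
  nlinarith [this]

-- case t ≤ 1 : L² ≤ 4 js1 / (t(1+t))
lemma L_sq_le_left {t : ℝ} (ht0 : 0 < t) (ht : t ≤ 1) :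
    Lfun t ^ 2 * (t * (1 + t)) ≤ 4 * js1 t := by
  set H : ℝ → ℝ := fun t => 4 * js1 t / (t * (1 + t)) - Lfun t ^ 2 with hH
  have hHder : ∀ s : ℝ, 0 < s → HasDerivAt H
      (-(4 * js1 s * (1 + 2*s)) / (s * (1 + s))^2) s := by
    intro s hs
    have hden : HasDerivAt (fun s : ℝ => s * (1 + s)) (1 * (1 + s) + s * 1) s :=
      (hasDerivAt_id s).mul ((hasDerivAt_id s).const_add 1)
    have hne : s * (1 + s) ≠ 0 := by positivity
    have h1 := ((js1_hasDeriv hs).const_mul 4).div hden hne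
    have h2 := (Lfun_hasDeriv hs).pow 2
    have h3 := h1.sub h2
    exact h3.congr_deriv (by field_simp; ring)
  have hanti : AntitoneOn H (Set.Ioc 0 1) := by
    apply antitoneOn_of_deriv_nonpos (convex_Ioc 0 1)
    · intro x hx
      exact ((hHder x hx.1).differentiableAt.continuousAt).continuousWithinAt
    · intro x hx
      rw [interior_Ioc] at hx
      exact ((hHder x hx.1).differentiableAt).differentiableWithinAt
    · intro x hx
      rw [interior_Ioc] at hx
      rw [(hHder x hx.1).deriv]
      have hjs := js1_nonneg hx.1
      have h1 : (0:ℝ) < 1 + 2*x := by linarith [hx.1]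
      apply div_nonpos_of_nonpos_of_nonneg
      · nlinarith
      · positivity
  have := hanti (Set.mem_Ioc.2 ⟨ht0, ht⟩) (Set.mem_Ioc.2 ⟨one_pos, le_rfl⟩) ht
  simp only [hH, js1_one, Lfun_one] at this
  norm_num at this
  have hpos : (0:ℝ) < t * (1 + t) := by positivity
  calc Lfun t ^ 2 * (t * (1+t)) ≤ (4 * js1 t / (t * (1+t))) * (t * (1+t)) := by
        apply mul_le_mul_of_nonneg_right this hpos.le
    _ = 4 * js1 t := by field_simp

lemma L_sq_le {w t : ℝ} (hw : 1 ≤ w) (ht : t ∈ Set.Icc w⁻¹ w) :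
    Lfun t ^ 2 ≤ 4 * w^2 * js1 t := by
  have hw0 : (0:ℝ) < w := by linarith
  have ht0 : (0:ℝ) < t := lt_of_lt_of_le (by positivity) ht.1
  have hjs := js1_nonneg ht0
  rcases le_or_gt 1 t with h1 | h1
  · have := L_sq_le_right h1
    have h2 : 2 * t * (1 + t) ≤ 4 * w^2 := by nlinarith [ht.2]
    nlinarith
  · have := L_sq_le_left ht0 h1.le
    -- t ≥ w⁻¹  ⇒  t*(1+t) ≥ w⁻²  ⇒ 4*w^2*js1*(t*(1+t)) ≥ 4*js1 ≥ L²*(t(1+t))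
    have h3 : w⁻¹ ≤ t := ht.1
    have h4 : w⁻¹ * w⁻¹ ≤ t * (1 + t) := by nlinarith [inv_pos.2 hw0]
    have h5 : w⁻¹ * w = 1 := inv_mul_cancel₀ hw0.ne'
    have hpos : (0:ℝ) < t * (1 + t) := by positivity
    have h6 : (w⁻¹*w)*(w⁻¹*w) = 1 := by rw [h5]; ring
    have hT : 1 ≤ w^2 * (t*(1+t)) := by
      nlinarith [mul_nonneg (sq_nonneg w) (sub_nonneg.2 h4), h6]
    have h7 : 4*js1 t ≤ 4*w^2*js1 t*(t*(1+t)) := by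
      nlinarith [mul_nonneg hjs (sub_nonneg.2 hT)]
    nlinarith [this, h7, hpos]

lemma abs_Lfun_le {w t : ℝ} (hw : 1 ≤ w) (ht : t ∈ Set.Icc w⁻¹ w) :
    |Lfun t| ≤ 2 * w * Real.sqrt (js1 t) := by
  have hw0 : (0:ℝ) < w := by linarith
  have ht0 : (0:ℝ) < t := lt_of_lt_of_le (by positivity) ht.1
  have h := L_sq_le hw ht
  have h2 : (2 * w * Real.sqrt (js1 t))^2 = 4 * w^2 * js1 t := by
    rw [mul_pow, mul_pow, Real.sq_sqrt (js1_nonneg ht0)]; ring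
  have h3 : |Lfun t| = Real.sqrt (Lfun t ^ 2) := (Real.sqrt_sq_eq_abs _).symm
  rw [h3]
  calc Real.sqrt (Lfun t^2) ≤ Real.sqrt ((2*w*Real.sqrt (js1 t))^2) :=
        Real.sqrt_le_sqrt (by rw [h2]; exact h)
    _ = 2*w*Real.sqrt (js1 t) := Real.sqrt_sq (by positivity)

lemma Lfun_diff_le {w u t : ℝ} (hw : 1 ≤ w) (hu : u ∈ Set.Icc w⁻¹ w)
    (ht : t ∈ Set.Icc w⁻¹ w) (hut : u ≤ t) : Lfun t - Lfun u ≤ w^2 * (t - u) := by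
  have hw0 : (0:ℝ) < w := by linarith
  set G : ℝ → ℝ := fun s => w^2 * s - Lfun s with hG
  have hGder : ∀ s : ℝ, 0 < s → HasDerivAt G (w^2 - 1/(s*(1+s))) s := by
    intro s hs
    have h := ((hasDerivAt_id s).const_mul (w^2)).sub (Lfun_hasDeriv hs)
    have h' : HasDerivAt G (w^2*1 - 1/(s*(1+s))) s := h
    simpa using h'
  have hmono : MonotoneOn G (Set.Icc w⁻¹ w) := by
    apply monotoneOn_of_deriv_nonneg (convex_Icc _ _)
    · intro x hx
      have hx0 : (0:ℝ) < x := lt_of_lt_of_le (by positivity) hx.1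
      exact ((hGder x hx0).differentiableAt.continuousAt).continuousWithinAt
    · intro x hx
      rw [interior_Icc] at hx
      have hx0 : (0:ℝ) < x := lt_of_lt_of_le (by positivity) hx.1.le
      exact ((hGder x hx0).differentiableAt).differentiableWithinAt
    · intro x hx
      rw [interior_Icc] at hx
      have hx0 : (0:ℝ) < x := lt_of_lt_of_le (by positivity) hx.1.le
      rw [(hGder x hx0).deriv]
      have h4 : w⁻¹ * w⁻¹ ≤ x * (1 + x) := by nlinarith [inv_pos.2 hw0, hx.1.le]
      have h5 : w⁻¹ * w = 1 := inv_mul_cancel₀ hw0.ne'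
      have hpos : (0:ℝ) < x * (1 + x) := by positivity
      have : 1/(x*(1+x)) ≤ w^2 := by
        rw [div_le_iff₀ hpos]
        nlinarith [inv_pos.2 hw0]
      linarith
  have := hmono hu ht hut
  simp only [hG] at this
  linarith

lemma js1_taylor {w u t : ℝ} (hw : 1 ≤ w) (hu : u ∈ Set.Icc w⁻¹ w)
    (ht : t ∈ Set.Icc w⁻¹ w) :
    js1 t ≤ js1 u + (Lfun u / 2) * (t - u) + (w^2/4) * (t - u)^2 := by
  have hw0 : (0:ℝ) < w := by linarith
  set P : ℝ → ℝ := fun s => js1 u + (Lfun u / 2) * (s - u) + (w^2/4) * (s - u)^2 - js1 s with hP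
  have hPder : ∀ s : ℝ, 0 < s → HasDerivAt P
      (Lfun u / 2 + (w^2/4) * (2 * (s-u)) - Lfun s / 2) s := by
    intro s hs
    have h1 : HasDerivAt (fun s : ℝ => s - u) 1 s := (hasDerivAt_id s).sub_const u
    have h2 := ((h1.pow 2).const_mul (w^2/4)).const_add (js1 u + (Lfun u / 2) * (s - u))
    have h3 : HasDerivAt (fun s : ℝ => (Lfun u / 2) * (s - u)) (Lfun u / 2) s := by
      simpa using h1.const_mul (Lfun u / 2)
    have h4 := ((h3.add ((h1.pow 2).const_mul (w^2/4))).const_add (js1 u)).sub (js1_hasDeriv hs)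
    have hPeq : P = fun x => js1 u + ((Lfun u / 2) * (x - u) + (w^2/4) * (x - u)^2) - js1 x := by
      funext x; simp only [hP]; ring
    rw [hPeq]
    exact h4.congr_deriv (by push_cast; ring)
  have key : ∀ x ∈ Set.Icc w⁻¹ w, 0 ≤ P x := by
    intro x hx
    have hu0 : (0:ℝ) < u := lt_of_lt_of_le (by positivity) hu.1
    rcases le_or_gt u x with hux | hux
    · -- monotone on [u, w]
      have hmono : MonotoneOn P (Set.Icc u w) := by
        apply monotoneOn_of_deriv_nonneg (convex_Icc _ _)
        · intro y hy
          have hy0 : (0:ℝ) < y := lt_of_lt_of_le hu0 hy.1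
          exact ((hPder y hy0).differentiableAt.continuousAt).continuousWithinAt
        · intro y hy
          rw [interior_Icc] at hy
          have hy0 : (0:ℝ) < y := lt_of_lt_of_le hu0 hy.1.le
          exact ((hPder y hy0).differentiableAt).differentiableWithinAt
        · intro y hy
          rw [interior_Icc] at hy
          have hy0 : (0:ℝ) < y := lt_of_lt_of_le hu0 hy.1.le
          rw [(hPder y hy0).deriv]
          have hyI : y ∈ Set.Icc w⁻¹ w := ⟨le_trans hu.1 hy.1.le, hy.2.le⟩
          have := Lfun_diff_le hw hu hyI hy.1.le
          nlinarith
      have h0 : P u = 0 := by simp [hP]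
      have := hmono (Set.mem_Icc.2 ⟨le_rfl, hu.2⟩) (Set.mem_Icc.2 ⟨hux, hx.2⟩) hux
      linarith [h0 ▸ this]
    · -- antitone on [w⁻¹, u]
      have hanti : AntitoneOn P (Set.Icc w⁻¹ u) := by
        apply antitoneOn_of_deriv_nonpos (convex_Icc _ _)
        · intro y hy
          have hy0 : (0:ℝ) < y := lt_of_lt_of_le (by positivity) hy.1
          exact ((hPder y hy0).differentiableAt.continuousAt).continuousWithinAt
        · intro y hy
          rw [interior_Icc] at hy
          have hy0 : (0:ℝ) < y := lt_of_lt_of_le (by positivity) hy.1.le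
          exact ((hPder y hy0).differentiableAt).differentiableWithinAt
        · intro y hy
          rw [interior_Icc] at hy
          have hy0 : (0:ℝ) < y := lt_of_lt_of_le (by positivity) hy.1.le
          rw [(hPder y hy0).deriv]
          have hyI : y ∈ Set.Icc w⁻¹ w := ⟨hy.1.le, le_trans hy.2.le hu.2⟩
          have := Lfun_diff_le hw hyI hu hy.2.le
          nlinarith
      have h0 : P u = 0 := by simp [hP]
      have := hanti (Set.mem_Icc.2 ⟨hx.1, hux.le⟩) (Set.mem_Icc.2 ⟨hu.1, le_rfl⟩) hux.le
      linarith [h0 ▸ this]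
  have := key t ht
  simp only [hP] at this
  linarith

lemma sqrt_js1_lip {w u t : ℝ} (hw : 1 ≤ w) (hu : u ∈ Set.Icc w⁻¹ w)
    (ht : t ∈ Set.Icc w⁻¹ w) :
    Real.sqrt (js1 t) ≤ Real.sqrt (js1 u) + (w/2) * |t - u| := by
  have hw0 : (0:ℝ) < w := by linarith
  have hu0 : (0:ℝ) < u := lt_of_lt_of_le (by positivity) hu.1
  have ht0 : (0:ℝ) < t := lt_of_lt_of_le (by positivity) ht.1
  have h1 := js1_taylor hw hu ht
  have h2 := abs_Lfun_le hw hu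
  have h3 : js1 t ≤ (Real.sqrt (js1 u) + (w/2) * |t - u|)^2 := by
    have hs : Real.sqrt (js1 u) ^ 2 = js1 u := Real.sq_sqrt (js1_nonneg hu0)
    have habs : (Lfun u / 2) * (t - u) ≤ (|Lfun u| / 2) * |t - u| := by
      calc (Lfun u / 2) * (t - u) ≤ |(Lfun u / 2) * (t - u)| := le_abs_self _
        _ = (|Lfun u| / 2) * |t - u| := by rw [abs_mul, abs_div]; norm_num
    have hsq : (t - u)^2 = |t - u|^2 := (sq_abs _).symm
    nlinarith [Real.sqrt_nonneg (js1 u), abs_nonneg (t - u)]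
  calc Real.sqrt (js1 t) ≤ Real.sqrt ((Real.sqrt (js1 u) + (w/2) * |t - u|)^2) :=
        Real.sqrt_le_sqrt h3
    _ = Real.sqrt (js1 u) + (w/2) * |t - u| := by
        rw [Real.sqrt_sq (by positivity)]

noncomputable def jsFun (x z : ℝ) : ℝ :=
  (1/2) * (x * Real.log (x / ((x + z) / 2))) + (1/2) * (z * Real.log (z / ((x + z) / 2)))

lemma jsFun_eq_js1 {x z : ℝ} (hx : 0 < x) (hz : 0 < z) :
    jsFun x z = z * js1 (x / z) := by
  have hxz : (0:ℝ) < x + z := by linarith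
  have e1 : 2 * (x/z) / (1 + x/z) = x / ((x + z) / 2) := by
    field_simp; ring
  have e2 : 2 / (1 + x/z) = z / ((x + z) / 2) := by
    field_simp; ring
  unfold jsFun js1
  rw [e1, e2]
  field_simp

lemma jsFun_nonneg {x z : ℝ} (hx : 0 < x) (hz : 0 < z) : 0 ≤ jsFun x z := by
  rw [jsFun_eq_js1 hx hz]
  exact mul_nonneg hz.le (js1_nonneg (by positivity))

lemma jsFun_key {w x y z β : ℝ} (hw : 1 ≤ w) (hz : 0 < z) (hβ : 0 ≤ β)
    (hx1 : w⁻¹ * z ≤ x) (hx2 : x ≤ w * z) (hy1 : w⁻¹ * z ≤ y) (hy2 : y ≤ w * z)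
    (hxy : |x - y| ≤ β * z) :
    Real.sqrt (jsFun x z) ≤ Real.sqrt (jsFun y z) + (w * β / 2) * Real.sqrt z := by
  have hw0 : (0:ℝ) < w := by linarith
  have hx0 : (0:ℝ) < x := lt_of_lt_of_le (by positivity) hx1
  have hy0 : (0:ℝ) < y := lt_of_lt_of_le (by positivity) hy1
  have htI : x / z ∈ Set.Icc w⁻¹ w :=
    ⟨(le_div_iff₀ hz).2 (by linarith), (div_le_iff₀ hz).2 (by linarith [hx2])⟩
  have huI : y / z ∈ Set.Icc w⁻¹ w :=
    ⟨(le_div_iff₀ hz).2 (by linarith), (div_le_iff₀ hz).2 (by linarith [hy2])⟩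
  have hlip := sqrt_js1_lip hw huI htI
  have habs : |x / z - y / z| ≤ β := by
    rw [div_sub_div_same, abs_div, abs_of_pos hz]
    exact (div_le_iff₀ hz).2 hxy
  have hlip2 : Real.sqrt (js1 (x/z)) ≤ Real.sqrt (js1 (y/z)) + (w/2) * β := by
    have : (w/2) * |x/z - y/z| ≤ (w/2) * β := by
      apply mul_le_mul_of_nonneg_left habs (by positivity)
    linarith
  rw [jsFun_eq_js1 hx0 hz, jsFun_eq_js1 hy0 hz, Real.sqrt_mul hz.le, Real.sqrt_mul hz.le]
  calc Real.sqrt z * Real.sqrt (js1 (x/z))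
      ≤ Real.sqrt z * (Real.sqrt (js1 (y/z)) + (w/2) * β) :=
        mul_le_mul_of_nonneg_left hlip2 (Real.sqrt_nonneg z)
    _ = Real.sqrt z * Real.sqrt (js1 (y/z)) + (w * β / 2) * Real.sqrt z := by ring

lemma jsFun_key2 {w x y z β l : ℝ} (hw : 1 ≤ w) (hz : 0 < z) (hβ : 0 ≤ β)
    (hx1 : w⁻¹ * z ≤ x) (hx2 : x ≤ w * z) (hy1 : w⁻¹ * z ≤ y) (hy2 : y ≤ w * z)
    (hxy : |x - y| ≤ β * z) (hl : 0 < l) :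
    jsFun x z ≤ (1 + l^2) * jsFun y z + (1 + (l⁻¹)^2) * (w * β / 2)^2 * z := by
  have hw0 : (0:ℝ) < w := by linarith
  have hx0 : (0:ℝ) < x := lt_of_lt_of_le (by positivity) hx1
  have hy0 : (0:ℝ) < y := lt_of_lt_of_le (by positivity) hy1
  have h := jsFun_key hw hz hβ hx1 hx2 hy1 hy2 hxy
  set A := Real.sqrt (jsFun y z) with hA
  set B := (w * β / 2) * Real.sqrt z with hB
  have hA0 : 0 ≤ A := Real.sqrt_nonneg _
  have hB0 : 0 ≤ B := by positivity
  have hAB : jsFun x z ≤ (A + B)^2 := by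
    have h1 : Real.sqrt (jsFun x z) ≤ A + B := h
    have h2 : jsFun x z = Real.sqrt (jsFun x z) ^ 2 := (Real.sq_sqrt (jsFun_nonneg hx0 hz)).symm
    rw [h2]
    exact pow_le_pow_left₀ (Real.sqrt_nonneg _) h1 2
  have hA2 : A^2 = jsFun y z := Real.sq_sqrt (jsFun_nonneg hy0 hz)
  have hB2 : B^2 = (w * β / 2)^2 * z := by
    rw [hB, mul_pow, Real.sq_sqrt hz.le]
  have hexp : (A + B)^2 ≤ (1 + l^2) * A^2 + (1 + (l⁻¹)^2) * B^2 := by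
    have hinv : l * l⁻¹ = 1 := mul_inv_cancel₀ hl.ne'
    nlinarith [sq_nonneg (l * A - l⁻¹ * B)]
  calc jsFun x z ≤ (A + B)^2 := hAB
    _ ≤ (1 + l^2) * A^2 + (1 + (l⁻¹)^2) * B^2 := hexp
    _ = (1 + l^2) * jsFun y z + (1 + (l⁻¹)^2) * (w * β / 2)^2 * z := by
        rw [hA2, hB2]; ring

lemma log_ratio_bound1 {w x z : ℝ} (hw : 1 ≤ w) (hz : 0 < z)
    (hx1 : w⁻¹ * z ≤ x) (hx2 : x ≤ w * z) :
    |x * Real.log (x / ((x + z) / 2))| ≤ (w * (Real.log 2 + 2 * Real.log w)) * z := by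
  have hw0 : (0:ℝ) < w := by linarith
  have hx0 : (0:ℝ) < x := lt_of_lt_of_le (by positivity) hx1
  have hm : (0:ℝ) < (x + z)/2 := by linarith
  have hR0 : 0 < x / ((x+z)/2) := by positivity
  have hiw : w⁻¹ * w = 1 := inv_mul_cancel₀ hw0.ne'
  have hup : x / ((x+z)/2) ≤ 2*w := by
    rw [div_le_iff₀ hm]
    nlinarith
  have hlo : w⁻¹ * w⁻¹ ≤ x / ((x+z)/2) := by
    rw [le_div_iff₀ hm]
    have h1 : x + z ≤ 2*w*z := by nlinarith
    nlinarith [inv_pos.2 hw0, mul_le_mul_of_nonneg_left h1 (mul_pos (inv_pos.2 hw0) (inv_pos.2 hw0)).le]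
  have hlogw : 0 ≤ Real.log w := Real.log_nonneg hw
  have h1 : Real.log (x / ((x+z)/2)) ≤ Real.log 2 + 2*Real.log w := by
    calc Real.log (x / ((x+z)/2)) ≤ Real.log (2*w) := Real.log_le_log hR0 hup
      _ = Real.log 2 + Real.log w := Real.log_mul (by norm_num) hw0.ne'
      _ ≤ _ := by linarith
  have h2 : -(Real.log 2 + 2*Real.log w) ≤ Real.log (x / ((x+z)/2)) := by
    have h3 : Real.log (w⁻¹*w⁻¹) ≤ Real.log (x / ((x+z)/2)) :=
      Real.log_le_log (by positivity) hlo
    rw [Real.log_mul (by positivity) (by positivity), Real.log_inv] at h3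
    have hlog2 : (0:ℝ) ≤ Real.log 2 := Real.log_nonneg (by norm_num)
    linarith
  have habs : |Real.log (x / ((x+z)/2))| ≤ Real.log 2 + 2*Real.log w := abs_le.2 ⟨h2, h1⟩
  calc |x * Real.log (x / ((x+z)/2))| = x * |Real.log (x / ((x+z)/2))| := by
        rw [abs_mul, abs_of_pos hx0]
    _ ≤ (w*z) * (Real.log 2 + 2*Real.log w) :=
        mul_le_mul hx2 habs (abs_nonneg _) (by positivity)
    _ = _ := by ring

lemma sqrt_opt {X Y s : ℝ} (hY : 0 ≤ Y) (hs : 0 ≤ s)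
    (h : ∀ l : ℝ, 0 < l → X ≤ (1 + l^2) * Y + (1 + (l⁻¹)^2) * s^2) :
    Real.sqrt X ≤ Real.sqrt Y + s := by
  have hX : X ≤ (Real.sqrt Y + s)^2 := by
    rcases eq_or_lt_of_le hY with hY0 | hY0
    · apply le_of_forall_pos_le_add
      intro ε hε
      rcases eq_or_lt_of_le hs with hs0 | hs0
      · have h1 := h 1 one_pos
        rw [← hY0, ← hs0] at h1
        norm_num at h1
        nlinarith [Real.sqrt_nonneg Y, Real.sqrt_nonneg (0:ℝ)]
      · set l := s / Real.sqrt ε with hl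
        have hl0 : 0 < l := by positivity
        have h1 := h l hl0
        have hls : (l⁻¹)^2 = ε / s^2 := by
          rw [hl]
          rw [inv_div, div_pow, Real.sq_sqrt hε.le]
        rw [← hY0, hls] at h1
        have hs2 : s^2 ≠ 0 := by positivity
        have : (1 + ε/s^2) * s^2 = s^2 + ε := by field_simp
        nlinarith [Real.sqrt_nonneg Y, sq_nonneg (Real.sqrt Y + s), Real.sqrt_nonneg (0:ℝ),
          Real.sq_sqrt hY]
    · rcases eq_or_lt_of_le hs with hs0 | hs0
      · apply le_of_forall_pos_le_add
        intro ε hε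
        set l := Real.sqrt (ε / Y) with hl
        have hl0 : 0 < l := Real.sqrt_pos.2 (by positivity)
        have h1 := h l hl0
        have hl2 : l^2 = ε / Y := Real.sq_sqrt (by positivity)
        rw [hl2, ← hs0] at h1
        have : (1 + ε/Y) * Y = Y + ε := by field_simp
        nlinarith [Real.sq_sqrt hY, Real.sqrt_nonneg Y]
      · set A := Real.sqrt Y with hA
        have hA0 : 0 < A := Real.sqrt_pos.2 hY0
        have hAY : A * A = Y := Real.mul_self_sqrt hY
        set l := Real.sqrt (s / A) with hl
        have hl0 : 0 < l := Real.sqrt_pos.2 (by positivity)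
        have hl2 : l^2 = s / A := Real.sq_sqrt (by positivity)
        have hli : (l⁻¹)^2 = A / s := by
          rw [inv_pow, hl2, inv_div]
        have h1 := h l hl0
        rw [hl2, hli] at h1
        have e1 : (1 + s/A) * Y = Y + s * A := by
          field_simp
          nlinarith [hAY]
        have e2 : (1 + A/s) * s^2 = s^2 + A * s := by
          field_simp
        nlinarith [h1]
  calc Real.sqrt X ≤ Real.sqrt ((Real.sqrt Y + s)^2) := Real.sqrt_le_sqrt hX
    _ = Real.sqrt Y + s := Real.sqrt_sq (by positivity)

end Aux

set_option maxHeartbeats 1000000 in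
/-- Secret sharing privacy bound: if the unprotected model information has distribution
`P^O` uniform on `∏_j [c_j − δ, c_j + δ]` and the protected (secret-shared) information has
distribution `P^S` uniform on `∏_j [c_j − a_j, c_j + b_j]` with `0 < δ < a_j, b_j`, then
the Bayesian privacy leakage satisfies
`√JS(f^A ‖ f_B) ≥ √JS(f^O ‖ f_B) − (1/2)·(e^{2ξ} − 1)·(1 − ∏_j (2δ/(a_j + b_j)))`. -/
theorem secret_sharing_privacy_bound
    (n : ℕ)
    {D : Type*} [MeasurableSpace D] (μ : Measure D) [SigmaFinite μ]
    (f : D → (Fin n → ℝ) → ℝ)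
    (hf_meas : Measurable fun p : D × (Fin n → ℝ) => f p.1 p.2)
    (hf_pos : ∀ d w, 0 < f d w)
    (hf_dens : ∀ w, ∫ d, f d w ∂μ = 1)
    (fB : D → ℝ)
    (hfB_meas : Measurable fB)
    (hfB_pos : ∀ d, 0 < fB d)
    (hfB_dens : ∫ d, fB d ∂μ = 1)
    (ξ : ℝ) (hξ : 0 ≤ ξ)
    (hBP : ∀ d w, |Real.log (f d w / fB d)| ≤ ξ)
    (c : Fin n → ℝ) (δ : ℝ) (hδ : 0 < δ)
    (a b : Fin n → ℝ) (ha : ∀ j, δ < a j) (hb : ∀ j, δ < b j) :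
    Real.sqrt (JSdiv μ
        (fun d => ∫ w, f d w
          ∂(uniformOn (Set.univ.pi fun j => Set.Icc (c j - a j) (c j + b j)))) fB)
      ≥ Real.sqrt (JSdiv μ
          (fun d => ∫ w, f d w
            ∂(uniformOn (Set.univ.pi fun j => Set.Icc (c j - δ) (c j + δ)))) fB)
        - (1 / 2) * (Real.exp (2 * ξ) - 1) * (1 - ∏ j, (2 * δ / (a j + b j))) := by
  classical
  set S : Set (Fin n → ℝ) := Set.univ.pi fun j => Set.Icc (c j - a j) (c j + b j) with hSdef
  set O : Set (Fin n → ℝ) := Set.univ.pi fun j => Set.Icc (c j - δ) (c j + δ) with hOdef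
  set E := Real.exp ξ with hEdef
  have hE1 : 1 ≤ E := Real.one_le_exp hξ
  have hE0 : (0:ℝ) < E := Real.exp_pos ξ
  have hmS : MeasurableSet S := MeasurableSet.univ_pi fun j => measurableSet_Icc
  have hmO : MeasurableSet O := MeasurableSet.univ_pi fun j => measurableSet_Icc
  set VS := ∏ j, (a j + b j) with hVSdef
  set VO := ∏ j : Fin n, (2*δ) with hVOdef
  have hVSpos : 0 < VS := Finset.prod_pos fun j _ => by have := ha j; have := hb j; linarith
  have hVOpos : 0 < VO := Finset.prod_pos fun j _ => by linarith
  have hvolS : volume S = ENNReal.ofReal VS := by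
    rw [hSdef, volume_pi_pi, hVSdef,
      ENNReal.ofReal_prod_of_nonneg (fun j _ => by have := ha j; have := hb j; linarith)]
    exact Finset.prod_congr rfl fun j _ => by rw [Real.volume_Icc]; ring_nf
  have hvolO : volume O = ENNReal.ofReal VO := by
    rw [hOdef, volume_pi_pi, hVOdef,
      ENNReal.ofReal_prod_of_nonneg (fun j _ => by linarith)]
    exact Finset.prod_congr rfl fun j _ => by rw [Real.volume_Icc]; ring_nf
  have hOS : O ⊆ S := by
    rw [hSdef, hOdef]
    apply Set.pi_mono
    intro j _
    exact Set.Icc_subset_Icc (by have := ha j; linarith) (by have := hb j; linarith)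
  have hvolS_ne_top : volume S ≠ ⊤ := by rw [hvolS]; exact ENNReal.ofReal_ne_top
  have hvolO_ne_top : volume O ≠ ⊤ := by rw [hvolO]; exact ENNReal.ofReal_ne_top
  have hvolS_ne_zero : volume S ≠ 0 := by
    rw [hvolS]; simp [ENNReal.ofReal_eq_zero]; linarith
  have hvolO_ne_zero : volume O ≠ 0 := by
    rw [hvolO]; simp [ENNReal.ofReal_eq_zero]; linarith
  have hVS_toReal : (volume S).toReal = VS := by rw [hvolS, ENNReal.toReal_ofReal hVSpos.le]
  have hVO_toReal : (volume O).toReal = VO := by rw [hvolO, ENNReal.toReal_ofReal hVOpos.le]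
  set r := VO / VS with hrdef
  have hr_eq : r = ∏ j, (2*δ/(a j + b j)) := by
    rw [hrdef, hVSdef, hVOdef, ← Finset.prod_div_distrib]
  have hr0 : 0 < r := by positivity
  have hVOVS : VO ≤ VS := Finset.prod_le_prod (fun j _ => by linarith)
    (fun j _ => by have := ha j; have := hb j; linarith)
  have hr1 : r ≤ 1 := by rw [hrdef, div_le_one hVSpos]; exact hVOVS
  -- pointwise band on f
  have hband : ∀ d w', E⁻¹ * fB d ≤ f d w' ∧ f d w' ≤ E * fB d := by
    intro d w'
    have hfBd := hfB_pos d
    have hfd := hf_pos d w'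
    have hratio : 0 < f d w' / fB d := by positivity
    have h1 := (abs_le.1 (hBP d w')).2
    have h2 := (abs_le.1 (hBP d w')).1
    have hup : f d w' / fB d ≤ E := (Real.log_le_iff_le_exp hratio).1 h1
    have hlo : E⁻¹ ≤ f d w' / fB d := by
      rw [hEdef, ← Real.exp_neg]
      calc Real.exp (-ξ) ≤ Real.exp (Real.log (f d w' / fB d)) := Real.exp_le_exp.2 h2
        _ = f d w' / fB d := Real.exp_log hratio
    constructor
    · calc E⁻¹ * fB d ≤ (f d w' / fB d) * fB d := mul_le_mul_of_nonneg_right hlo hfBd.le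
        _ = f d w' := by field_simp
    · calc f d w' = (f d w' / fB d) * fB d := by field_simp
        _ ≤ E * fB d := mul_le_mul_of_nonneg_right hup hfBd.le
  have hfd_meas : ∀ d, Measurable (f d) := fun d => hf_meas.comp measurable_prodMk_left
  have hintT : ∀ d (T : Set (Fin n → ℝ)), volume T ≠ ⊤ → IntegrableOn (f d) T volume := by
    intro d T hT
    haveI : IsFiniteMeasure (volume.restrict T) :=
      ⟨by rw [Measure.restrict_apply_univ]; exact hT.lt_top⟩
    apply Integrable.mono' (integrable_const (E * fB d)) (hfd_meas d).aestronglyMeasurable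
    exact Filter.Eventually.of_forall fun w' => by
      rw [Real.norm_eq_abs, abs_of_pos (hf_pos d w')]; exact (hband d w').2
  have hsetband : ∀ d (T : Set (Fin n → ℝ)), MeasurableSet T → volume T ≠ ⊤ →
      (volume T).toReal * (E⁻¹ * fB d) ≤ ∫ w in T, f d w ∧
      (∫ w in T, f d w) ≤ (volume T).toReal * (E * fB d) := by
    intro d T hmT hT
    haveI : IsFiniteMeasure (volume.restrict T) :=
      ⟨by rw [Measure.restrict_apply_univ]; exact hT.lt_top⟩
    constructor
    · have := setIntegral_mono_on (integrableOn_const hT) (hintT d T hT)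
        hmT (fun w' _ => (hband d w').1)
      simpa [setIntegral_const, smul_eq_mul, measureReal_def] using this
    · have := setIntegral_mono_on (hintT d T hT) (integrableOn_const hT)
        hmT (fun w' _ => (hband d w').2)
      simpa [setIntegral_const, smul_eq_mul, measureReal_def] using this
  -- the two mixture densities
  set fA : D → ℝ := fun d => ∫ w, f d w ∂(uniformOn S) with hfAdef
  set fO : D → ℝ := fun d => ∫ w, f d w ∂(uniformOn O) with hfOdef
  have hfA_eq : ∀ d, fA d = VS⁻¹ * ∫ w in S, f d w := by
    intro d
    rw [hfAdef]
    simp only [uniformOn]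
    rw [integral_smul_measure, smul_eq_mul, ENNReal.toReal_inv, hVS_toReal]
  have hfO_eq : ∀ d, fO d = VO⁻¹ * ∫ w in O, f d w := by
    intro d
    rw [hfOdef]
    simp only [uniformOn]
    rw [integral_smul_measure, smul_eq_mul, ENNReal.toReal_inv, hVO_toReal]
  have hfA_band : ∀ d, E⁻¹ * fB d ≤ fA d ∧ fA d ≤ E * fB d := by
    intro d
    have h := hsetband d S hmS hvolS_ne_top
    rw [hVS_toReal] at h
    constructor
    · rw [hfA_eq d]
      calc E⁻¹ * fB d = VS⁻¹ * (VS * (E⁻¹ * fB d)) := by field_simp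
        _ ≤ VS⁻¹ * ∫ w in S, f d w := mul_le_mul_of_nonneg_left h.1 (by positivity)
    · rw [hfA_eq d]
      calc VS⁻¹ * ∫ w in S, f d w ≤ VS⁻¹ * (VS * (E * fB d)) :=
            mul_le_mul_of_nonneg_left h.2 (by positivity)
        _ = E * fB d := by field_simp
  have hfO_band : ∀ d, E⁻¹ * fB d ≤ fO d ∧ fO d ≤ E * fB d := by
    intro d
    have h := hsetband d O hmO hvolO_ne_top
    rw [hVO_toReal] at h
    constructor
    · rw [hfO_eq d]
      calc E⁻¹ * fB d = VO⁻¹ * (VO * (E⁻¹ * fB d)) := by field_simp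
        _ ≤ VO⁻¹ * ∫ w in O, f d w := mul_le_mul_of_nonneg_left h.1 (by positivity)
    · rw [hfO_eq d]
      calc VO⁻¹ * ∫ w in O, f d w ≤ VO⁻¹ * (VO * (E * fB d)) :=
            mul_le_mul_of_nonneg_left h.2 (by positivity)
        _ = E * fB d := by field_simp
  -- difference bound
  have hSO : volume (S \ O) = volume S - volume O :=
    measure_diff hOS hmO.nullMeasurableSet hvolO_ne_top
  have hSO_ne_top : volume (S \ O) ≠ ⊤ := by
    rw [hSO]
    exact ne_top_of_le_ne_top hvolS_ne_top tsub_le_self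
  have hSO_toReal : (volume (S \ O)).toReal = VS - VO := by
    rw [hSO, ENNReal.toReal_sub_of_le
      (by rw [hvolS, hvolO]; exact ENNReal.ofReal_le_ofReal hVOVS) hvolS_ne_top,
      hVS_toReal, hVO_toReal]
  have hsplit : ∀ d, (∫ w in S, f d w) = (∫ w in O, f d w) + ∫ w in S \ O, f d w := by
    intro d
    rw [← setIntegral_union disjoint_sdiff_self_right (hmS.diff hmO)
      (hintT d O hvolO_ne_top) (hintT d _ hSO_ne_top), Set.union_diff_cancel hOS]
  set β := (1 - r) * (E - E⁻¹) with hβdef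
  have hEinv1 : E⁻¹ ≤ 1 := by
    rw [inv_le_one_iff₀]; right; exact hE1
  have hβ0 : 0 ≤ β := mul_nonneg (by linarith) (by linarith)
  have hdiff : ∀ d, |fO d - fA d| ≤ β * fB d := by
    intro d
    have hIR := hsetband d (S \ O) (hmS.diff hmO) hSO_ne_top
    rw [hSO_toReal] at hIR
    have hIOeq : (∫ w in O, f d w) = VO * fO d := by
      rw [hfO_eq d]; field_simp
    have hkey : fO d - fA d = (1 - r) * fO d - VS⁻¹ * ∫ w in S \ O, f d w := by
      rw [hfA_eq d, hsplit d, hIOeq, hrdef]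
      field_simp
      ring
    have h1r : VS⁻¹ * (VS - VO) = 1 - r := by rw [hrdef]; field_simp
    have hlo : (1 - r) * (E⁻¹ * fB d) ≤ VS⁻¹ * ∫ w in S \ O, f d w := by
      rw [← h1r, mul_assoc]
      exact mul_le_mul_of_nonneg_left hIR.1 (by positivity)
    have hup : VS⁻¹ * (∫ w in S \ O, f d w) ≤ (1 - r) * (E * fB d) := by
      rw [← h1r, mul_assoc]
      exact mul_le_mul_of_nonneg_left hIR.2 (by positivity)
    have hO1 := (hfO_band d).1
    have hO2 := (hfO_band d).2
    have hfBd := hfB_pos d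
    have h1r0 : (0:ℝ) ≤ 1 - r := by linarith
    have hfO_lo := mul_le_mul_of_nonneg_left hO1 h1r0
    have hfO_up := mul_le_mul_of_nonneg_left hO2 h1r0
    rw [abs_le, hkey, hβdef]
    constructor
    · linarith
    · linarith
  -- measurability of fA, fO
  haveI hfinS : IsFiniteMeasure (uniformOn S) := by
    constructor
    simp only [uniformOn, Measure.smul_apply, Measure.restrict_apply_univ, smul_eq_mul]
    exact ENNReal.mul_lt_top (ENNReal.inv_lt_top.2 (pos_iff_ne_zero.2 hvolS_ne_zero))
      hvolS_ne_top.lt_top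
  haveI hfinO : IsFiniteMeasure (uniformOn O) := by
    constructor
    simp only [uniformOn, Measure.smul_apply, Measure.restrict_apply_univ, smul_eq_mul]
    exact ENNReal.mul_lt_top (ENNReal.inv_lt_top.2 (pos_iff_ne_zero.2 hvolO_ne_zero))
      hvolO_ne_top.lt_top
  have hfA_m : Measurable fA :=
    (hf_meas.stronglyMeasurable.integral_prod_right' (ν := uniformOn S)).measurable
  have hfO_m : Measurable fO :=
    (hf_meas.stronglyMeasurable.integral_prod_right' (ν := uniformOn O)).measurable
  have hfB_int : Integrable fB μ := by
    by_contra hcon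
    rw [integral_undef hcon] at hfB_dens
    norm_num at hfB_dens
  -- JSdiv as a single integral
  have hJS : ∀ (p : D → ℝ), Measurable p → (∀ d, E⁻¹ * fB d ≤ p d ∧ p d ≤ E * fB d) →
      Integrable (fun d => jsFun (p d) (fB d)) μ ∧
      JSdiv μ p fB = ∫ d, jsFun (p d) (fB d) ∂μ := by
    intro p hp hpband
    have hppos : ∀ d, 0 < p d := fun d =>
      lt_of_lt_of_le (by have := hfB_pos d; positivity) (hpband d).1
    have hu1_m : Measurable (fun d => p d * Real.log (p d / ((p d + fB d)/2))) :=
      hp.mul (Real.measurable_log.comp (hp.div ((hp.add hfB_meas).div_const 2)))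
    have hu2_m : Measurable (fun d => fB d * Real.log (fB d / ((p d + fB d)/2))) :=
      hfB_meas.mul (Real.measurable_log.comp (hfB_meas.div ((hp.add hfB_meas).div_const 2)))
    have hlogE : Real.log E = ξ := by rw [hEdef, Real.log_exp]
    have hu1_bd : ∀ d, ‖p d * Real.log (p d / ((p d + fB d)/2))‖ ≤
        (E * (Real.log 2 + 2 * ξ)) * fB d := by
      intro d
      rw [Real.norm_eq_abs]
      have := log_ratio_bound1 hE1 (hfB_pos d) (hpband d).1 (hpband d).2
      rwa [hlogE] at this
    have hu2_bd : ∀ d, ‖fB d * Real.log (fB d / ((p d + fB d)/2))‖ ≤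
        (E * (E * (Real.log 2 + 2 * ξ))) * fB d := by
      intro d
      rw [Real.norm_eq_abs]
      have hb1 : E⁻¹ * p d ≤ fB d := by
        have := (hpband d).2
        have hE0' : (0:ℝ) < E := hE0
        nlinarith [mul_le_mul_of_nonneg_left (hpband d).2 (inv_pos.2 hE0).le,
          inv_mul_cancel₀ hE0.ne', hfB_pos d]
      have hb2 : fB d ≤ E * p d := by
        nlinarith [mul_le_mul_of_nonneg_left (hpband d).1 (le_of_lt hE0),
          mul_inv_cancel₀ hE0.ne', hfB_pos d]
      have := log_ratio_bound1 hE1 (hppos d) hb1 hb2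
      rw [hlogE] at this
      calc |fB d * Real.log (fB d / ((p d + fB d)/2))|
          = |fB d * Real.log (fB d / ((fB d + p d)/2))| := by rw [add_comm (p d)]
        _ ≤ (E * (Real.log 2 + 2*ξ)) * p d := this
        _ ≤ (E * (Real.log 2 + 2*ξ)) * (E * fB d) := by
            apply mul_le_mul_of_nonneg_left (hpband d).2
            have h2 : (0:ℝ) ≤ Real.log 2 := Real.log_nonneg (by norm_num)
            positivity
        _ = (E * (E * (Real.log 2 + 2 * ξ))) * fB d := by ring
    have hu1_int : Integrable (fun d => p d * Real.log (p d / ((p d + fB d)/2))) μ :=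
      Integrable.mono' (hfB_int.const_mul _) hu1_m.aestronglyMeasurable
        (Filter.Eventually.of_forall hu1_bd)
    have hu2_int : Integrable (fun d => fB d * Real.log (fB d / ((p d + fB d)/2))) μ :=
      Integrable.mono' (hfB_int.const_mul _) hu2_m.aestronglyMeasurable
        (Filter.Eventually.of_forall hu2_bd)
    constructor
    · exact (hu1_int.const_mul (1/2)).add (hu2_int.const_mul (1/2))
    · rw [JSdiv, ← integral_const_mul, ← integral_const_mul,
        ← integral_add ((hu1_int.const_mul (1/2))) ((hu2_int.const_mul (1/2)))]
      rfl
  have hA := hJS fA hfA_m hfA_band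
  have hO' := hJS fO hfO_m hfO_band
  -- pointwise comparison, integrated
  have hkey : ∀ l : ℝ, 0 < l →
      (∫ d, jsFun (fO d) (fB d) ∂μ) ≤
        (1 + l^2) * (∫ d, jsFun (fA d) (fB d) ∂μ) + (1 + (l⁻¹)^2) * (E * β / 2)^2 := by
    intro l hl
    have hpt : ∀ d, jsFun (fO d) (fB d) ≤
        (1 + l^2) * jsFun (fA d) (fB d) + (1 + (l⁻¹)^2) * (E * β / 2)^2 * fB d := fun d =>
      jsFun_key2 hE1 (hfB_pos d) hβ0 (hfO_band d).1 (hfO_band d).2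
        (hfA_band d).1 (hfA_band d).2 (hdiff d) hl
    calc (∫ d, jsFun (fO d) (fB d) ∂μ)
        ≤ ∫ d, ((1 + l^2) * jsFun (fA d) (fB d) + ((1 + (l⁻¹)^2) * (E * β / 2)^2) * fB d) ∂μ := by
          apply integral_mono hO'.1 ((hA.1.const_mul _).add (hfB_int.const_mul _))
          intro d
          have := hpt d
          simpa [mul_assoc] using this
      _ = (1 + l^2) * (∫ d, jsFun (fA d) (fB d) ∂μ) +
            ((1 + (l⁻¹)^2) * (E * β / 2)^2) * ∫ d, fB d ∂μ := by
          rw [integral_add (hA.1.const_mul _) (hfB_int.const_mul _),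
            integral_const_mul, integral_const_mul]
      _ = (1 + l^2) * (∫ d, jsFun (fA d) (fB d) ∂μ) + (1 + (l⁻¹)^2) * (E * β / 2)^2 := by
          rw [hfB_dens]; ring
  have hY0 : 0 ≤ ∫ d, jsFun (fA d) (fB d) ∂μ := by
    apply integral_nonneg
    intro d
    exact jsFun_nonneg (lt_of_lt_of_le (by have := hfB_pos d; positivity) (hfA_band d).1)
      (hfB_pos d)
  have hfinal := sqrt_opt hY0 (by positivity : (0:ℝ) ≤ E * β / 2) hkey
  have hs_expr : E * β / 2 =
      (1 / 2) * (Real.exp (2 * ξ) - 1) * (1 - ∏ j, (2 * δ / (a j + b j))) := by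
    rw [hβdef, ← hr_eq]
    have h2ξ : Real.exp (2 * ξ) = E * E := by rw [hEdef, ← Real.exp_add, two_mul]
    have hEi : E * E⁻¹ = 1 := mul_inv_cancel₀ hE0.ne'
    rw [h2ξ]
    nlinarith [hEi]
  rw [ge_iff_le, sub_le_iff_le_add]
  rw [hA.2, hO'.2]
  rw [← hs_expr]
  linarith [hfinal]
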